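/- arXiv:1512.06918 — 3 statements merged into one kernel-verified Lean document; each statement's English description precedes it below -/
import Mathlib

section
/- Let ψ be a smooth odd function on ℝ supported in {1/4 ≤ |x| ≤ 1}, and ψ_k(t) = 2^{-k} ψ(2^{-k} t). Fix λ > 0 and integers k, l with 1 ≤ λ 2^{2k-l} < 2 and l ≤ 0. Then |∫ e^{2πi λ t²} ψ_k(t) dt| ≲ 2^{l}. -/
open Real Set MeasureTheory

noncomputable section

lemma exp_I_sub_one_bound (x : ℝ) : ‖Complex.exp (Complex.I * x) - 1‖ ≤ |x| := by
  have h1 : Complex.I * x = (x : ℂ) * Complex.I := by ring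
  rw [h1]
  have hre : (Complex.exp ((x : ℂ) * Complex.I) - 1).re = Real.cos x - 1 := by
    simp [Complex.exp_ofReal_mul_I_re]
  have him : (Complex.exp ((x : ℂ) * Complex.I) - 1).im = Real.sin x := by
    simp [Complex.exp_ofReal_mul_I_im]
  rw [Complex.norm_def, Complex.normSq_apply, hre, him]
  have h2 : (Real.cos x - 1) * (Real.cos x - 1) + Real.sin x * Real.sin x ≤ x ^ 2 := by
    have hs := Real.sin_sq_le_sq (x := x / 2)
    have hh : Real.cos x = 1 - 2 * Real.sin (x / 2) ^ 2 := by
      have h1 := Real.cos_two_mul (x / 2)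
      have h0 := Real.sin_sq_add_cos_sq (x / 2)
      rw [show 2 * (x / 2) = x by ring] at h1
      nlinarith
    nlinarith [Real.sin_sq_add_cos_sq x]
  calc Real.sqrt ((Real.cos x - 1) * (Real.cos x - 1) + Real.sin x * Real.sin x)
      ≤ Real.sqrt (x ^ 2) := Real.sqrt_le_sqrt h2
    _ = |x| := Real.sqrt_sq_eq_abs x

/-- The `l ≤ 0` case of (e:mu<): for `1 ≤ λ 2^{2k-l} < 2` and `l ≤ 0`, the oscillatory
integral `∫ e(λt²) ψ_k(t) dt` satisfies the bound `≲ 2^{l}`. -/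
theorem stmt5 (ψ : ℝ → ℝ) (hψ : ContDiff ℝ (⊤ : ℕ∞) ψ) (hodd : ∀ x, ψ (-x) = -ψ x)
    (hsupp : ∀ x, ψ x ≠ 0 → 1 / 4 ≤ |x| ∧ |x| ≤ 1) :
    ∃ C : ℝ, 0 < C ∧ ∀ (k l : ℤ) (lam : ℝ), 0 < lam → l ≤ 0 →
      1 ≤ lam * 2 ^ (2 * k - l) → lam * 2 ^ (2 * k - l) < 2 →
      ‖∫ t : ℝ, Complex.exp (Complex.I * ((2 * π * (lam * t ^ 2) : ℝ) : ℂ)) *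
          (((2 : ℝ) ^ (-k) * ψ ((2 : ℝ) ^ (-k) * t) : ℝ) : ℂ)‖ ≤ C * 2 ^ l := by
  have hψc : Continuous ψ := hψ.continuous
  have hψsupp : HasCompactSupport ψ := by
    apply HasCompactSupport.intro (isCompact_Icc (a := (-1 : ℝ)) (b := 1))
    intro x hx
    by_contra h
    exact hx (abs_le.mp (hsupp x h).2)
  have hψint : Integrable ψ := hψc.integrable_of_hasCompactSupport hψsupp
  set M := ∫ x, |ψ x| with hM
  have hMpos : 0 ≤ M := integral_nonneg fun x => abs_nonneg _
  have hMint : Integrable (fun x => |ψ x|) := hψint.abs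
  refine ⟨4 * π * (M + 1), by positivity, ?_⟩
  intro k l lam hlam hl h1 h2
  set c : ℝ := (2 : ℝ) ^ (-k) with hc
  have hcpos : 0 < c := zpow_pos two_pos _
  set μ : ℝ := lam * 2 ^ (2 * k) with hμ
  have hμpos : 0 < μ := by positivity
  have hsplit : (2 : ℝ) ^ (2 * k) = 2 ^ (2 * k - l) * 2 ^ l := by
    rw [← zpow_add₀ (by norm_num : (2:ℝ) ≠ 0), sub_add_cancel]
  have h2l : (0 : ℝ) < 2 ^ l := zpow_pos two_pos _
  have hμle : μ ≤ 2 * 2 ^ l := by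
    rw [hμ, hsplit, ← mul_assoc]
    exact mul_le_mul_of_nonneg_right h2.le h2l.le
  have hc2 : (2 : ℝ) ^ (2 * k) * c ^ 2 = 1 := by
    rw [hc, ← zpow_natCast ((2:ℝ) ^ (-k)) 2, ← zpow_mul,
      ← zpow_add₀ (by norm_num : (2:ℝ) ≠ 0)]
    have he : 2 * k + -k * ((2:ℕ):ℤ) = 0 := by push_cast; ring
    rw [he, zpow_zero]
  set F : ℝ → ℂ := fun s =>
    Complex.exp (Complex.I * ((2 * π * (μ * s ^ 2) : ℝ) : ℂ)) * (ψ s : ℂ) with hF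
  -- substitution
  have hsub : (∫ t : ℝ, Complex.exp (Complex.I * ((2 * π * (lam * t ^ 2) : ℝ) : ℂ)) *
      (((2 : ℝ) ^ (-k) * ψ ((2 : ℝ) ^ (-k) * t) : ℝ) : ℂ)) = ∫ s : ℝ, F s := by
    have hpt : ∀ t : ℝ, Complex.exp (Complex.I * ((2 * π * (lam * t ^ 2) : ℝ) : ℂ)) *
        (((2 : ℝ) ^ (-k) * ψ ((2 : ℝ) ^ (-k) * t) : ℝ) : ℂ) = c • F (c * t) := by
      intro t
      have harg : 2 * π * (lam * t ^ 2) = 2 * π * (μ * (c * t) ^ 2) := by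
        rw [hμ]; linear_combination (-(2 * π * lam * t ^ 2)) * hc2
      rw [hF]
      simp only [← hc, harg, Complex.real_smul]
      push_cast
      ring
    simp_rw [hpt]
    rw [integral_smul, MeasureTheory.Measure.integral_comp_mul_left F c, smul_smul,
      abs_of_pos (inv_pos.mpr hcpos), mul_inv_cancel₀ hcpos.ne', one_smul]
  rw [hsub]
  -- integrabilities
  have hcontE : Continuous fun s : ℝ =>
      Complex.exp (Complex.I * ((2 * π * (μ * s ^ 2) : ℝ) : ℂ)) - 1 := by
    fun_prop
  have hψCint : Integrable (fun s : ℝ => (ψ s : ℂ)) :=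
    (Complex.continuous_ofReal.comp hψc).integrable_of_hasCompactSupport
      (hψsupp.comp_left Complex.ofReal_zero)
  have hEψint : Integrable (fun s : ℝ =>
      (Complex.exp (Complex.I * ((2 * π * (μ * s ^ 2) : ℝ) : ℂ)) - 1) * (ψ s : ℂ)) := by
    apply (hcontE.mul (Complex.continuous_ofReal.comp hψc)).integrable_of_hasCompactSupport
    exact ((hψsupp.comp_left Complex.ofReal_zero).mul_left)
  -- integral of ψ is zero
  have hψ0 : (∫ s : ℝ, (ψ s : ℂ)) = 0 := by
    have h0 : (∫ x : ℝ, ψ x) = 0 := by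
      have hh : (∫ x : ℝ, ψ (-x)) = ∫ x : ℝ, ψ x := integral_neg_eq_self ψ _
      simp only [hodd] at hh
      rw [integral_neg] at hh
      linarith
    have h3 : (∫ s : ℝ, (ψ s : ℂ)) = ((∫ s : ℝ, ψ s : ℝ) : ℂ) := by
      simpa using Complex.ofRealCLM.integral_comp_comm hψint
    rw [h3, h0, Complex.ofReal_zero]
  have hFeq : (∫ s : ℝ, F s) = ∫ s : ℝ,
      (Complex.exp (Complex.I * ((2 * π * (μ * s ^ 2) : ℝ) : ℂ)) - 1) * (ψ s : ℂ) := by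
    have : (∫ s : ℝ, F s) = ∫ s : ℝ,
        ((Complex.exp (Complex.I * ((2 * π * (μ * s ^ 2) : ℝ) : ℂ)) - 1) * (ψ s : ℂ)
          + (ψ s : ℂ)) := by
      congr 1; funext s; rw [hF]; ring
    rw [this, integral_add hEψint hψCint, hψ0, add_zero]
  rw [hFeq]
  -- the bound
  have hbound : ‖∫ s : ℝ,
      (Complex.exp (Complex.I * ((2 * π * (μ * s ^ 2) : ℝ) : ℂ)) - 1) * (ψ s : ℂ)‖ ≤
      ∫ s : ℝ, (2 * π * (2 * 2 ^ l)) * |ψ s| := by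
    apply norm_integral_le_of_norm_le ((hMint.const_mul _))
    filter_upwards with s
    rw [norm_mul, Complex.norm_real, Real.norm_eq_abs]
    rcases eq_or_ne (ψ s) 0 with h | h
    · simp [h]
    · have hs1 : |s| ≤ 1 := (hsupp s h).2
      have hs2 : s ^ 2 ≤ 1 := by
        have := abs_nonneg s
        nlinarith [sq_abs s]
      have hE : ‖Complex.exp (Complex.I * ((2 * π * (μ * s ^ 2) : ℝ) : ℂ)) - 1‖ ≤
          2 * π * (2 * 2 ^ l) := by
        refine (exp_I_sub_one_bound _).trans ?_
        rw [abs_of_nonneg (by positivity)]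
        have : μ * s ^ 2 ≤ 2 * 2 ^ l := by nlinarith
        nlinarith [pi_pos]
      exact mul_le_mul_of_nonneg_right hE (abs_nonneg _)
  refine hbound.trans ?_
  rw [integral_const_mul]
  have : 2 * π * (2 * 2 ^ l) * M = (4 * π * M) * 2 ^ l := by ring
  rw [← hM] at *
  nlinarith [pi_pos, h2l, hMpos]
end
end

section
/- Let ψ be a smooth function supported in {1/4 ≤ |x| ≤ 1}, ψ_j(t) = 2^{-j}ψ(2^{-j}t). Fix 0 < ε < 1/4, j ≥ 1, and a rational pair (A/Q, B/Q) with gcd(A,B,Q)=1 and Q ≤ 2^{εj}. For (λ,β) with |λ - A/Q| ≤ 2^{(ε-2)j} and |β - B/Q| ≤ 2^{(ε-1)j}, the exponential sum M_j(λ,β) = ∑_{m ∈ ℤ} e^{2πi(λ m² - β m)} ψ_j(m) satisfies M_j(λ,β) = S(A/Q,B/Q) · H_j(λ - A/Q, β - B/Q) + O(2^{(3ε-1)j}), where S(A/Q,B/Q) = Q^{-1} ∑_{r=0}^{Q-1} e^{2πi(A r²/Q - B r/Q)} and H_j(x,y) = ∫ e^{2πi(x t² - y t)} ψ_j(t) dt.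 -/
open Real MeasureTheory

noncomputable section

private lemma exp_split9 (x y : ℝ) : Complex.exp (Complex.I * ((x + y : ℝ):ℂ)) =
    Complex.exp (Complex.I * (x:ℂ)) * Complex.exp (Complex.I * (y:ℂ)) := by
  push_cast; rw [mul_add, Complex.exp_add]

private lemma exp_add_int9 (x : ℝ) (k : ℤ) :
    Complex.exp (Complex.I * ((2 * π * (x + k) : ℝ) : ℂ)) =
    Complex.exp (Complex.I * ((2 * π * x : ℝ) : ℂ)) := by
  push_cast
  rw [mul_add, mul_add, Complex.exp_add]
  have h : Complex.I * (2 * ↑π * (k:ℂ)) = (k:ℂ) * (2 * ↑π * Complex.I) := by ring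
  rw [h, Complex.exp_int_mul_two_pi_mul_I, mul_one]

private lemma norm_exp_I9 (x : ℝ) : ‖Complex.exp (Complex.I * (x:ℂ))‖ = 1 := by
  rw [Complex.norm_exp]; simp

set_option maxHeartbeats 3200000 in
/-- Major-arc approximation: for `(λ,β)` in the major box around `(A/Q, B/Q)`,
`M_j(λ,β) = S(A/Q,B/Q) H_j(λ - A/Q, β - B/Q) + O(2^{(3ε-1)j})`. -/
theorem stmt9 (ψ : ℝ → ℝ) (hψ : ContDiff ℝ (⊤ : ℕ∞) ψ)
    (hsupp : ∀ x, ψ x ≠ 0 → 1 / 4 ≤ |x| ∧ |x| ≤ 1)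
    (ε : ℝ) (hε0 : 0 < ε) (hε : ε < 1 / 4) :
    ∃ C : ℝ, 0 < C ∧ ∀ (j : ℕ), 1 ≤ j → ∀ (A B : ℤ) (Q : ℕ), 1 ≤ Q →
      (Q : ℝ) ≤ 2 ^ (ε * j) → Int.gcd A (Int.gcd B (Q : ℤ)) = 1 →
      ∀ lam β : ℝ, |lam - (A : ℝ) / Q| ≤ 2 ^ ((ε - 2) * j) →
        |β - (B : ℝ) / Q| ≤ 2 ^ ((ε - 1) * j) →
      ‖(∑' m : ℤ, Complex.exp (Complex.I *
            ((2 * π * (lam * (m : ℝ) ^ 2 - β * m) : ℝ) : ℂ)) *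
            (((2 : ℝ) ^ (-(j : ℤ)) * ψ ((2 : ℝ) ^ (-(j : ℤ)) * m) : ℝ) : ℂ))
        - (1 / (Q : ℂ)) * (∑ r ∈ Finset.range Q, Complex.exp (Complex.I *
            ((2 * π * (((A : ℝ) * r ^ 2 - (B : ℝ) * r) / Q) : ℝ) : ℂ)))
          * ∫ t : ℝ, Complex.exp (Complex.I *
              ((2 * π * ((lam - (A : ℝ) / Q) * t ^ 2 - (β - (B : ℝ) / Q) * t) : ℝ) : ℂ)) *
              (((2 : ℝ) ^ (-(j : ℤ)) * ψ ((2 : ℝ) ^ (-(j : ℤ)) * t) : ℝ) : ℂ)‖ ≤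
        C * 2 ^ ((3 * ε - 1) * j) := by
  classical
  have hψc : Continuous ψ := hψ.continuous
  have hψd : Differentiable ℝ ψ := hψ.differentiable (by simp)
  have hψ'c : Continuous (deriv ψ) := hψ.continuous_deriv (by simp)
  have hzero : ∀ x : ℝ, 1 < |x| → ψ x = 0 := by
    intro x hx
    by_contra h
    exact absurd (hsupp x h).2 (not_le.mpr hx)
  have hdzero : ∀ x : ℝ, 1 < |x| → deriv ψ x = 0 := by
    intro x hx
    have h : ψ =ᶠ[nhds x] (fun _ => 0) := by
      have ho : IsOpen {y : ℝ | 1 < |y|} := isOpen_lt continuous_const continuous_abs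
      filter_upwards [ho.mem_nhds hx] with y hy using hzero y hy
    rw [h.deriv_eq, deriv_const]
  obtain ⟨C1, hC1⟩ := (isCompact_Icc (a := (-1:ℝ)) (b := 1)).exists_bound_of_continuousOn
    hψc.continuousOn
  obtain ⟨C2, hC2⟩ := (isCompact_Icc (a := (-1:ℝ)) (b := 1)).exists_bound_of_continuousOn
    hψ'c.continuousOn
  set Cψ : ℝ := max (max C1 C2) 0 with hCψdef
  have hCψ0 : 0 ≤ Cψ := le_max_right _ _
  have hb1 : ∀ x, |ψ x| ≤ Cψ := by
    intro x
    rcases le_or_gt |x| 1 with h | h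
    · have := hC1 x (by rw [Set.mem_Icc]; constructor <;> [linarith [abs_le.mp h]; linarith [abs_le.mp h]])
      exact this.trans ((le_max_left C1 C2).trans (le_max_left _ _))
    · rw [hzero x h]; simpa using hCψ0
  have hb2 : ∀ x, |deriv ψ x| ≤ Cψ := by
    intro x
    rcases le_or_gt |x| 1 with h | h
    · have := hC2 x (by rw [Set.mem_Icc]; constructor <;> [linarith [abs_le.mp h]; linarith [abs_le.mp h]])
      exact this.trans ((le_max_right C1 C2).trans (le_max_left _ _))
    · rw [hdzero x h]; simpa using hCψ0
  have hπ : (0:ℝ) < π := Real.pi_pos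
  refine ⟨5 * (6*π+1) * (Cψ+1), by positivity, ?_⟩
  intro j hj A B Q hQ1 hQε hgcd lam β hlam hβ
  -- notation
  set p : ℝ := (2:ℝ)^(-(j:ℤ)) with hpdef
  set P : ℝ := (2:ℝ)^(j:ℕ) with hPdef
  have hP1 : (1:ℝ) ≤ P := one_le_pow₀ one_le_two
  have hP0 : (0:ℝ) < P := by positivity
  have hp_eq : p = P⁻¹ := by rw [hpdef, hPdef, zpow_neg, zpow_natCast]
  have hp0 : (0:ℝ) < p := by rw [hp_eq]; positivity
  have hpP : p * P = 1 := by rw [hp_eq]; field_simp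
  have hp_rpow : p = (2:ℝ) ^ (-(j:ℝ)) := by
    rw [hpdef, ← Real.rpow_intCast]; push_cast; ring_nf
  have hP_rpow : P = (2:ℝ) ^ ((j:ℝ)) := by rw [hPdef, ← Real.rpow_natCast]
  set μ : ℝ := lam - (A:ℝ)/Q with hμdef
  set κ : ℝ := β - (B:ℝ)/Q with hκdef
  set ψj : ℝ → ℝ := fun t => p * ψ (p * t) with hψjdef
  set g : ℝ → ℂ := fun t => Complex.exp (Complex.I * ((2*π*(μ*t^2 - κ*t) : ℝ):ℂ)) *
    ((ψj t : ℝ):ℂ) with hgdef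
  have hQ0 : (0:ℝ) < Q := by exact_mod_cast hQ1
  have hQ0' : (0:ℤ) < (Q:ℤ) := by exact_mod_cast hQ1
  -- derivative of g
  set ψj' : ℝ → ℝ := fun t => p * (deriv ψ (p*t) * p) with hψj'def
  set g' : ℝ → ℂ := fun t =>
    Complex.I * ((2*π*(2*μ*t - κ) : ℝ):ℂ) * Complex.exp (Complex.I * ((2*π*(μ*t^2 - κ*t) : ℝ):ℂ))
      * ((ψj t : ℝ):ℂ)
    + Complex.exp (Complex.I * ((2*π*(μ*t^2 - κ*t) : ℝ):ℂ)) * ((ψj' t : ℝ):ℂ) with hg'def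
  have hgd : ∀ t, HasDerivAt g (g' t) t := by
    intro t
    have h1 : HasDerivAt (fun t : ℝ => 2*π*(μ*t^2 - κ*t)) (2*π*(2*μ*t - κ)) t := by
      have := (((hasDerivAt_pow 2 t).const_mul μ).sub ((hasDerivAt_id t).const_mul κ)).const_mul
        (2*π)
      exact this.congr_deriv (by norm_num; ring)
    have h2 : HasDerivAt (fun x => Complex.exp (Complex.I * ((2*π*(μ*x^2 - κ*x) : ℝ):ℂ)))
        (Complex.I * ((2*π*(2*μ*t - κ) : ℝ):ℂ) *
          Complex.exp (Complex.I * ((2*π*(μ*t^2 - κ*t) : ℝ):ℂ))) t := by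
      have h2' : HasDerivAt (fun x : ℝ => Complex.I * ((2*π*(μ*x^2 - κ*x) : ℝ):ℂ))
          (Complex.I * ((2*π*(2*μ*t - κ) : ℝ):ℂ)) t := (h1.ofReal_comp).const_mul Complex.I
      simpa [mul_comm] using h2'.cexp
    have h3 : HasDerivAt (fun x : ℝ => ((ψj x : ℝ):ℂ)) (((ψj' t : ℝ):ℂ)) t := by
      have hψjd : HasDerivAt ψj (ψj' t) t := by
        have h1' : HasDerivAt (fun x : ℝ => p * x) p t := by
          simpa using (hasDerivAt_id t).const_mul p
        exact (((hψd (p*t)).hasDerivAt).comp t h1').const_mul p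
      exact hψjd.ofReal_comp
    exact h2.mul h3
  -- bound on g'
  set D : ℝ := (2:ℝ) ^ ((ε-2)*(j:ℝ)) with hDdef
  have hD0 : 0 < D := Real.rpow_pos_of_pos two_pos _
  set E1 : ℝ := (2:ℝ) ^ ((ε-1)*(j:ℝ)) with hE1def
  set Eε : ℝ := (2:ℝ) ^ (ε*(j:ℝ)) with hEεdef
  set K : ℝ := (6*π+1) * Cψ * D with hKdef
  have hK0 : 0 ≤ K := by positivity
  have hDP : D * P = E1 := by
    rw [hDdef, hP_rpow, hE1def, ← Real.rpow_add two_pos]; congr 1; ring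
  have hE1p : E1 * p = D := by
    rw [hE1def, hp_rpow, hDdef, ← Real.rpow_add two_pos]; congr 1; ring
  have hpp : p * p ≤ D := by
    rw [hp_rpow, ← Real.rpow_add two_pos, hDdef]
    apply Real.rpow_le_rpow_of_exponent_le one_le_two
    have hj0 : (0:ℝ) ≤ (j:ℝ) := Nat.cast_nonneg j
    nlinarith [mul_nonneg hε0.le hj0]
  have hψj_zero : ∀ t : ℝ, P < |t| → ψj t = 0 := by
    intro t ht
    have h1 : 1 < |p * t| := by
      rw [abs_mul, abs_of_pos hp0, ← hpP]
      exact mul_lt_mul_of_pos_left ht hp0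
    simp [hψjdef, hzero _ h1]
  have hg_zero : ∀ t : ℝ, P < |t| → g t = 0 := by
    intro t ht; simp [hgdef, hψj_zero t ht]
  have hgb : ∀ t, ‖g' t‖ ≤ K := by
    intro t
    have e1 : ‖Complex.I * ((2*π*(2*μ*t - κ) : ℝ):ℂ) *
        Complex.exp (Complex.I * ((2*π*(μ*t^2 - κ*t) : ℝ):ℂ)) * ((ψj t : ℝ):ℂ)‖
        = |2*π*(2*μ*t - κ)| * |ψj t| := by
      rw [norm_mul, norm_mul, norm_mul, Complex.norm_I, one_mul, norm_exp_I9, mul_one,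
        Complex.norm_real, Complex.norm_real, Real.norm_eq_abs, Real.norm_eq_abs]
    have e2 : ‖Complex.exp (Complex.I * ((2*π*(μ*t^2 - κ*t) : ℝ):ℂ)) * ((ψj' t : ℝ):ℂ)‖
        = |ψj' t| := by
      rw [norm_mul, norm_exp_I9, one_mul, Complex.norm_real, Real.norm_eq_abs]
    have hn1 : ‖g' t‖ ≤ |2*π*(2*μ*t - κ)| * |ψj t| + |ψj' t| := by
      rw [hg'def]
      exact (norm_add_le _ _).trans (by rw [e1, e2])
    rcases le_or_gt |t| P with hc | hc
    · have hψjb : |ψj t| ≤ p * Cψ := by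
        have heq : |ψj t| = p * |ψ (p * t)| := by
          rw [hψjdef]; exact (abs_mul p _).trans (by rw [abs_of_pos hp0])
        rw [heq]
        exact mul_le_mul_of_nonneg_left (hb1 _) hp0.le
      have hψj'b : |ψj' t| ≤ p * (Cψ * p) := by
        have heq : |ψj' t| = p * (|deriv ψ (p * t)| * p) := by
          rw [hψj'def]
          rw [show |p * (deriv ψ (p*t) * p)| = |p| * (|deriv ψ (p*t)| * |p|) by
            rw [abs_mul, abs_mul], abs_of_pos hp0]
        rw [heq]
        exact mul_le_mul_of_nonneg_left
          (mul_le_mul_of_nonneg_right (hb2 _) hp0.le) hp0.le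
      have hxb : |2*π*(2*μ*t - κ)| ≤ 6*π*E1 := by
        rw [abs_mul, abs_of_pos (by positivity : (0:ℝ) < 2*π)]
        have h1 : |2*μ*t - κ| ≤ 2 * |μ| * |t| + |κ| := by
          have h1a : |2*μ*t - κ| ≤ |2*μ*t| + |κ| := by
            rw [sub_eq_add_neg]
            exact (abs_add_le _ _).trans (by rw [abs_neg])
          have h1b : |2*μ*t| = 2 * |μ| * |t| := by
            rw [abs_mul, abs_mul, abs_two]
          linarith
        have h2 : 2 * |μ| * |t| ≤ 2*D*P :=
          mul_le_mul (mul_le_mul_of_nonneg_left hlam (by norm_num)) hc (abs_nonneg t)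
            (by positivity)
        have h3 : |2*μ*t - κ| ≤ 3 * E1 := by linarith [hβ, hDP]
        calc 2*π * |2*μ*t - κ| ≤ 2*π*(3*E1) :=
              mul_le_mul_of_nonneg_left h3 (by positivity)
          _ = 6*π*E1 := by ring
      have hE10 : 0 < E1 := Real.rpow_pos_of_pos two_pos _
      have step : |2*π*(2*μ*t - κ)| * |ψj t| + |ψj' t| ≤ (6*π*E1) * (p*Cψ) + p*(Cψ*p) :=
        add_le_add (mul_le_mul hxb hψjb (abs_nonneg _)
          (mul_nonneg (by positivity : (0:ℝ) ≤ 6*π) hE10.le)) hψj'b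
      have final : (6*π*E1) * (p*Cψ) + p*(Cψ*p) ≤ K := by
        have h4 : (6*π*E1) * (p*Cψ) = 6*π*Cψ*D := by rw [← hE1p]; ring
        have h5 : p*(Cψ*p) ≤ Cψ * D := by linarith [mul_le_mul_of_nonneg_left hpp hCψ0]
        rw [hKdef]; nlinarith [hπ, mul_nonneg hCψ0 hD0.le]
      exact hn1.trans (step.trans final)
    · have h1 : ψj t = 0 := hψj_zero t hc
      have h2 : ψj' t = 0 := by
        have hgt : 1 < |p * t| := by
          rw [abs_mul, abs_of_pos hp0, ← hpP]
          exact mul_lt_mul_of_pos_left hc hp0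
        rw [hψj'def]; simp [hdzero _ hgt]
      refine (hn1.trans ?_)
      rw [h1, h2]; simpa using hK0
  have hLip : ∀ a b : ℝ, ‖g b - g a‖ ≤ K * ‖b - a‖ := fun a b =>
    convex_univ.norm_image_sub_le_of_norm_hasDerivWithin_le
      (fun x _ => (hgd x).hasDerivWithinAt) (fun x _ => hgb x) (Set.mem_univ a) (Set.mem_univ b)
  have hgcont : Continuous g := by
    apply Continuous.mul
    · exact Complex.continuous_exp.comp (continuous_const.mul (Complex.continuous_ofReal.comp
        (by fun_prop)))
    · exact Complex.continuous_ofReal.comp (by fun_prop)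
  -- combinatorial setup
  set T : ℤ := 2^j with hTdef
  have hT0 : (0:ℤ) < T := by positivity
  have hTP : ((T:ℤ):ℝ) = P := by rw [hTdef, hPdef]; push_cast; ring
  set nmin : ℤ := -(T + 1) with hnmindef
  set N : ℕ := 2 * 2^j + 3 with hNdef
  have hNT : ((N:ℕ):ℤ) = 2*T + 3 := by rw [hNdef, hTdef]; push_cast; ring
  set f : ℤ → ℂ := fun m => Complex.exp (Complex.I *
      ((2 * π * (lam * (m : ℝ) ^ 2 - β * m) : ℝ) : ℂ)) * ((ψj (m:ℝ) : ℝ):ℂ) with hfdef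
  set e : ℕ → ℂ := fun r => Complex.exp (Complex.I *
      ((2 * π * (((A : ℝ) * r ^ 2 - (B : ℝ) * r) / Q) : ℝ) : ℂ)) with hedef
  have hf0 : ∀ m : ℤ, m ∉ Finset.Icc (-T) T → f m = 0 := by
    intro m hm
    have h1 : P < |(m:ℝ)| := by
      rw [Finset.mem_Icc, not_and_or] at hm
      rw [← hTP]
      rcases hm with hm | hm
      · push_neg at hm
        rw [abs_of_neg (by exact_mod_cast lt_trans hm (by linarith [hT0] : -T < 0))]
        have : (T:ℝ) < -(m:ℝ) := by
          have : m < -T := hm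
          exact_mod_cast (by omega : T < -m)
        linarith
      · push_neg at hm
        have : (T:ℝ) < (m:ℝ) := by exact_mod_cast hm
        calc ((T:ℤ):ℝ) < (m:ℝ) := this
          _ ≤ |(m:ℝ)| := le_abs_self _
    simp [hfdef, hψj_zero _ h1]
  have htsum : (∑' m : ℤ, f m) = ∑ m ∈ Finset.Icc (-T) T, f m := tsum_eq_sum hf0
  -- reindex
  set ι : ℕ × ℕ → ℤ := fun rk => (Q:ℤ)*(nmin + (rk.2:ℤ)) + (rk.1:ℤ) with hιdef
  have key : ∑ m ∈ Finset.Icc (-T) T, f m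
      = ∑ r ∈ Finset.range Q, ∑ k ∈ Finset.range N, f (ι (r, k)) := by
    have hinj : ∀ a ∈ Finset.range Q ×ˢ Finset.range N,
        ∀ b ∈ Finset.range Q ×ˢ Finset.range N, ι a = ι b → a = b := by
      intro a ha b hb hab
      simp only [Finset.mem_product, Finset.mem_range] at ha hb
      rw [hιdef] at hab
      simp only at hab
      have hQx : (Q:ℤ) * ((a.2:ℤ) - (b.2:ℤ)) = (b.1:ℤ) - (a.1:ℤ) := by linear_combination hab
      have h2 : (a.2:ℤ) = (b.2:ℤ) := by
        by_contra hne
        have h3 : 1 ≤ |(a.2:ℤ) - (b.2:ℤ)| := Int.one_le_abs (sub_ne_zero.mpr hne)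
        have h4 : (Q:ℤ) ≤ |(Q:ℤ) * ((a.2:ℤ) - (b.2:ℤ))| := by
          rw [abs_mul, abs_of_nonneg hQ0'.le]
          nlinarith
        rw [hQx] at h4
        have h5 : |(b.1:ℤ) - (a.1:ℤ)| < Q := by
          rw [abs_lt]
          constructor <;> [omega; omega]
        omega
      have h1 : (a.1:ℤ) = (b.1:ℤ) := by
        rw [h2] at hab
        linarith [hab]
      exact Prod.ext (by exact_mod_cast h1) (by exact_mod_cast h2)
    have hsub : Finset.Icc (-T) T ⊆ (Finset.range Q ×ˢ Finset.range N).image ι := by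
      intro m hm
      rw [Finset.mem_Icc] at hm
      rw [Finset.mem_image]
      have hr0 : 0 ≤ m % Q := Int.emod_nonneg m (ne_of_gt hQ0')
      have hrQ : m % Q < Q := Int.emod_lt_of_pos m hQ0'
      have hdm : (Q:ℤ) * (m / Q) + m % Q = m := Int.mul_ediv_add_emod m Q
      have hQT : (T:ℤ) ≤ (Q:ℤ) * T := le_mul_of_one_le_left hT0.le (by exact_mod_cast hQ1)
      have hn_lb : nmin < m / Q := by
        have h1 : (Q:ℤ) * nmin < (Q:ℤ) * (m / Q) := by
          have h1a : (Q:ℤ) * nmin = -((Q:ℤ)*T) - Q := by rw [hnmindef]; ring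
          have h1b : (Q:ℤ) * (m / Q) = m - m % Q := by linarith
          rw [h1a, h1b]; omega
        exact lt_of_mul_lt_mul_left h1 hQ0'.le
      have hn_ub : m / Q ≤ T := by
        have h1 : (Q:ℤ) * (m / Q) ≤ (Q:ℤ) * T := by omega
        exact le_of_mul_le_mul_left h1 hQ0'
      refine ⟨((m % Q).toNat, (m / Q - nmin).toNat), ?_, ?_⟩
      · rw [Finset.mem_product, Finset.mem_range, Finset.mem_range]
        constructor
        · omega
        · have : ((N:ℕ):ℤ) = 2*T + 3 := hNT
          omega
      · rw [hιdef]
        simp only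
        have h1 : (((m / Q - nmin).toNat : ℕ) : ℤ) = m / Q - nmin :=
          Int.toNat_of_nonneg (by omega)
        have h2 : (((m % Q).toNat : ℕ) : ℤ) = m % Q := Int.toNat_of_nonneg hr0
        rw [h1, h2, show nmin + (m / Q - nmin) = m / Q by ring]
        linarith
    calc ∑ m ∈ Finset.Icc (-T) T, f m
        = ∑ m ∈ (Finset.range Q ×ˢ Finset.range N).image ι, f m :=
          Finset.sum_subset hsub (fun m _ hm => hf0 m hm)
      _ = ∑ a ∈ Finset.range Q ×ˢ Finset.range N, f (ι a) := Finset.sum_image hinj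
      _ = ∑ r ∈ Finset.range Q, ∑ k ∈ Finset.range N, f (ι (r, k)) :=
          Finset.sum_product _ _ _
  -- residue factorization
  have hfact : ∀ r k : ℕ, r < Q → f (ι (r,k)) = e r * g (((ι (r,k) : ℤ) : ℝ)) := by
    intro r k _
    have hQne : (Q:ℝ) ≠ 0 := ne_of_gt hQ0
    set m : ℤ := ι (r,k) with hmdef
    set n : ℤ := nmin + (k:ℤ) with hndef
    have hmQ : m = (Q:ℤ) * n + r := by rw [hmdef, hιdef]
    set kk : ℤ := n * (A*(m + r) - B) with hkkdef
    have hZ : (A:ℝ)*(m:ℝ)^2 - (B:ℝ)*(m:ℝ) = (A:ℝ)*(r:ℝ)^2 - (B:ℝ)*(r:ℝ) + (Q:ℝ)*(kk:ℝ) := by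
      have hZint : A*m^2 - B*m = A*r^2 - B*r + (Q:ℤ)*kk := by
        rw [hkkdef, hmQ]; ring
      exact_mod_cast hZint
    have e1 : lam*(m:ℝ)^2 - β*(m:ℝ)
        = ((A:ℝ)/Q*(m:ℝ)^2 - (B:ℝ)/Q*(m:ℝ)) + (μ*(m:ℝ)^2 - κ*(m:ℝ)) := by
      rw [hμdef, hκdef]; ring
    have e2 : (A:ℝ)/Q*(m:ℝ)^2 - (B:ℝ)/Q*(m:ℝ) = ((A:ℝ)*(r:ℝ)^2 - (B:ℝ)*(r:ℝ))/Q + (kk:ℝ) := by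
      field_simp
      linear_combination hZ
    have hreal : (2*π*(lam*(m:ℝ)^2 - β*(m:ℝ)) : ℝ)
        = (2*π*(((A:ℝ)*(r:ℝ)^2 - (B:ℝ)*(r:ℝ))/Q + (kk:ℝ)) : ℝ)
          + (2*π*(μ*(m:ℝ)^2 - κ*(m:ℝ)) : ℝ) := by
      rw [e1, e2]; ring
    have hexp : Complex.exp (Complex.I * ((2*π*(lam*(m:ℝ)^2 - β*(m:ℝ)) : ℝ):ℂ))
        = e r * Complex.exp (Complex.I * ((2*π*(μ*(m:ℝ)^2 - κ*(m:ℝ)) : ℝ):ℂ)) := by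
      rw [hreal, exp_split9, exp_add_int9]
    rw [hfdef, hgdef]
    simp only
    rw [hexp]
    ring
  -- per-residue estimate
  have hgInt : Integrable g := by
    apply hgcont.integrable_of_hasCompactSupport
    apply HasCompactSupport.intro (isCompact_Icc (a := -P) (b := P))
    intro t ht
    apply hg_zero
    rw [Set.mem_Icc, not_and_or] at ht
    rcases ht with ht | ht <;> push_neg at ht
    · rw [abs_of_neg (by linarith)]; linarith
    · rw [abs_of_pos (by linarith)]; linarith
  have hQC : ((Q:ℕ):ℂ) ≠ 0 := by
    simpa using (Nat.cast_ne_zero (R := ℂ)).mpr (by omega)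
  have hper : ∀ r : ℕ, r < Q →
      ‖(∑ k ∈ Finset.range N, g (((ι (r,k) : ℤ) : ℝ))) - (1/(Q:ℂ)) * ∫ t : ℝ, g t‖
        ≤ N * (K * Q) := by
    intro r hr
    set x : ℕ → ℝ := fun k => (Q:ℝ)*(((nmin:ℤ):ℝ)+(k:ℕ)) + ((r:ℕ):ℝ) with hxdef
    have hxeq : ∀ k : ℕ, ((ι (r,k) : ℤ) : ℝ) = x k := by
      intro k; rw [hιdef, hxdef]; push_cast; ring
    have hstep : ∀ k : ℕ, x (k+1) - x k = Q := by intro k; rw [hxdef]; push_cast; ring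
    have hxmono : ∀ k : ℕ, x k ≤ x (k+1) := fun k => by linarith [hstep k, hQ0]
    have htele : ∑ k ∈ Finset.range N, ∫ t in (x k)..(x (k+1)), g t
        = ∫ t in (x 0)..(x N), g t :=
      intervalIntegral.sum_integral_adjacent_intervals (fun k _ => hgcont.intervalIntegrable _ _)
    have hnminR : ((nmin:ℤ):ℝ) = -(P+1) := by
      rw [hnmindef]; push_cast [← hTP]; ring
    have hrQR : ((r:ℕ):ℝ) ≤ (Q:ℝ) - 1 := by
      have : (r+1 : ℝ) ≤ (Q:ℝ) := by exact_mod_cast Nat.succ_le_of_lt hr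
      linarith
    have hr0R : (0:ℝ) ≤ ((r:ℕ):ℝ) := Nat.cast_nonneg r
    have hQ1R : (1:ℝ) ≤ (Q:ℝ) := by exact_mod_cast hQ1
    have hx0 : x 0 < -P := by
      rw [hxdef]; simp only [Nat.cast_zero, add_zero]
      rw [hnminR]
      nlinarith
    have hxN : P < x N := by
      have hNR : ((N:ℕ):ℝ) = 2*P + 3 := by
        rw [hNdef, hPdef]; push_cast; ring
      simp only [hxdef, hnminR, hNR]
      nlinarith
    have hx0N : x 0 ≤ x N := by linarith [hP0]
    have hIg : ∫ t : ℝ, g t = ∫ t in (x 0)..(x N), g t := by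
      rw [intervalIntegral.integral_of_le hx0N]
      refine (setIntegral_eq_integral_of_forall_compl_eq_zero ?_).symm
      intro t ht
      rw [Set.mem_Ioc, not_and_or] at ht
      apply hg_zero
      rcases ht with ht | ht <;> push_neg at ht
      · rw [abs_of_neg (by linarith)]; linarith
      · rw [abs_of_pos (by linarith)]; linarith
    have hbr : ∀ k : ℕ, ‖g (x k) - (1/((Q:ℕ):ℂ)) * ∫ t in (x k)..(x (k+1)), g t‖ ≤ K * Q := by
      intro k
      have hid : g (x k) - (1/((Q:ℕ):ℂ)) * ∫ t in (x k)..(x (k+1)), g t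
          = (1/((Q:ℕ):ℂ)) * ∫ t in (x k)..(x (k+1)), (g (x k) - g t) := by
        rw [intervalIntegral.integral_sub intervalIntegrable_const
          (hgcont.intervalIntegrable _ _)]
        rw [intervalIntegral.integral_const, hstep k]
        rw [Complex.real_smul]
        push_cast
        field_simp
      rw [hid, norm_mul]
      have h1 : ‖(1:ℂ)/((Q:ℕ):ℂ)‖ = 1/(Q:ℝ) := by
        rw [norm_div, norm_one, Complex.norm_natCast]
      have h2 : ‖∫ t in (x k)..(x (k+1)), (g (x k) - g t)‖ ≤ (K*Q) * |x (k+1) - x k| := by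
        apply intervalIntegral.norm_integral_le_of_norm_le_const
        intro t ht
        rw [Set.uIoc_of_le (hxmono k)] at ht
        have ht1 : x k < t := ht.1
        have ht2 : t ≤ x (k+1) := ht.2
        calc ‖g (x k) - g t‖ ≤ K * ‖x k - t‖ := hLip t (x k)
          _ ≤ K * Q := by
              rw [Real.norm_eq_abs, abs_sub_comm, abs_of_pos (by linarith)]
              have : t - x k ≤ (Q:ℝ) := by linarith [hstep k]
              exact mul_le_mul_of_nonneg_left this hK0
      rw [hstep k, abs_of_pos hQ0] at h2
      rw [h1]
      calc (1/(Q:ℝ)) * ‖∫ t in (x k)..(x (k+1)), (g (x k) - g t)‖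
          ≤ (1/(Q:ℝ)) * ((K*Q) * Q) := by
            apply mul_le_mul_of_nonneg_left h2 (by positivity)
        _ = K * Q := by field_simp
    have hre : ∀ k ∈ Finset.range N, g (((ι (r,k) : ℤ) : ℝ)) = g (x k) :=
      fun k _ => by rw [hxeq k]
    rw [Finset.sum_congr rfl hre, hIg, ← htele, Finset.mul_sum, ← Finset.sum_sub_distrib]
    refine (norm_sum_le _ _).trans ?_
    calc ∑ k ∈ Finset.range N, ‖g (x k) - (1/((Q:ℕ):ℂ)) * ∫ t in (x k)..(x (k+1)), g t‖
        ≤ ∑ _k ∈ Finset.range N, K * Q := Finset.sum_le_sum (fun k _ => hbr k)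
      _ = N * (K * Q) := by rw [Finset.sum_const, Finset.card_range, nsmul_eq_mul]
  -- assemble
  set Sr : ℕ → ℂ := fun r => (∑ k ∈ Finset.range N, g (((ι (r,k) : ℤ) : ℝ)))
    - (1/((Q:ℕ):ℂ)) * ∫ t : ℝ, g t with hSrdef
  have hL : (∑' m : ℤ, f m) - (1/((Q:ℕ):ℂ) * ∑ r ∈ Finset.range Q, e r) * (∫ t : ℝ, g t)
      = ∑ r ∈ Finset.range Q, e r * Sr r := by
    rw [htsum, key]
    have hc1 : ∀ r ∈ Finset.range Q, ∑ k ∈ Finset.range N, f (ι (r,k))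
        = e r * ∑ k ∈ Finset.range N, g (((ι (r,k) : ℤ) : ℝ)) := by
      intro r hr
      rw [Finset.mul_sum]
      exact Finset.sum_congr rfl (fun k _ => hfact r k (Finset.mem_range.mp hr))
    rw [Finset.sum_congr rfl hc1]
    have hc2 : (1/((Q:ℕ):ℂ) * ∑ r ∈ Finset.range Q, e r) * (∫ t : ℝ, g t)
        = ∑ r ∈ Finset.range Q, e r * (1/((Q:ℕ):ℂ) * ∫ t : ℝ, g t) := by
      rw [show (1/((Q:ℕ):ℂ) * ∑ r ∈ Finset.range Q, e r) * (∫ t : ℝ, g t)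
        = (∑ r ∈ Finset.range Q, e r) * (1/((Q:ℕ):ℂ) * ∫ t : ℝ, g t) by ring]
      rw [Finset.sum_mul]
    rw [hc2, ← Finset.sum_sub_distrib]
    refine Finset.sum_congr rfl (fun r _ => ?_)
    rw [hSrdef]
    simp only
    ring
  have hnorm : ‖∑ r ∈ Finset.range Q, e r * Sr r‖ ≤ (Q:ℝ) * ((N:ℝ) * (K * Q)) := by
    refine (norm_sum_le _ _).trans ?_
    have hterm : ∀ r ∈ Finset.range Q, ‖e r * Sr r‖ ≤ (N:ℝ) * (K * Q) := by
      intro r hr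
      rw [norm_mul, hedef]
      simp only
      rw [norm_exp_I9, one_mul]
      exact hper r (Finset.mem_range.mp hr)
    calc ∑ r ∈ Finset.range Q, ‖e r * Sr r‖ ≤ ∑ _r ∈ Finset.range Q, (N:ℝ) * (K * Q) :=
          Finset.sum_le_sum hterm
      _ = (Q:ℝ) * ((N:ℝ) * (K * Q)) := by rw [Finset.sum_const, Finset.card_range, nsmul_eq_mul]
  have hEε0 : (0:ℝ) < Eε := Real.rpow_pos_of_pos two_pos _
  have hNP5 : ((N:ℕ):ℝ) ≤ 5 * P := by
    have hNR : ((N:ℕ):ℝ) = 2*P + 3 := by rw [hNdef, hPdef]; push_cast; ring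
    rw [hNR]; linarith
  have hfin : (Q:ℝ) * ((N:ℝ) * (K * Q)) ≤ 5*(6*π+1)*(Cψ+1) * (2:ℝ)^((3*ε-1)*(j:ℝ)) := by
    have hX2 : Eε * (P * (D * Eε)) = (2:ℝ)^((3*ε-1)*(j:ℝ)) := by
      rw [hEεdef, hP_rpow, hDdef, ← Real.rpow_add two_pos, ← Real.rpow_add two_pos,
        ← Real.rpow_add two_pos]
      congr 1; ring
    have hX : Eε * ((5*P) * (((6*π+1)*Cψ*D) * Eε))
        = 5*(6*π+1)*Cψ * (2:ℝ)^((3*ε-1)*(j:ℝ)) := by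
      rw [← hX2]; ring
    have hmono : (Q:ℝ) * ((N:ℝ) * (K * Q)) ≤ Eε * ((5*P) * (((6*π+1)*Cψ*D) * Eε)) := by
      have hKQ : K * (Q:ℝ) ≤ ((6*π+1)*Cψ*D) * Eε := by
        rw [hKdef]
        exact mul_le_mul_of_nonneg_left hQε (by positivity)
      have hNK : (N:ℝ) * (K * Q) ≤ (5*P) * (((6*π+1)*Cψ*D) * Eε) := by
        apply mul_le_mul hNP5 hKQ (by positivity) (by positivity)
      exact mul_le_mul hQε hNK (by positivity) hEε0.le
    have h2p : (0:ℝ) < (2:ℝ)^((3*ε-1)*(j:ℝ)) := Real.rpow_pos_of_pos two_pos _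
    calc (Q:ℝ) * ((N:ℝ) * (K * Q)) ≤ Eε * ((5*P) * (((6*π+1)*Cψ*D) * Eε)) := hmono
      _ = 5*(6*π+1)*Cψ * (2:ℝ)^((3*ε-1)*(j:ℝ)) := hX
      _ ≤ 5*(6*π+1)*(Cψ+1) * (2:ℝ)^((3*ε-1)*(j:ℝ)) := by nlinarith [hπ, h2p]
  have hfold : (∑' m : ℤ, Complex.exp (Complex.I *
        ((2 * π * (lam * (m : ℝ) ^ 2 - β * m) : ℝ) : ℂ)) *
        ((p * ψ (p * (m:ℝ)) : ℝ) : ℂ)) = ∑' m : ℤ, f m :=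
    tsum_congr (fun m => by rw [hfdef])
  calc ‖(∑' m : ℤ, Complex.exp (Complex.I *
          ((2 * π * (lam * (m : ℝ) ^ 2 - β * m) : ℝ) : ℂ)) *
          ((p * ψ (p * (m:ℝ)) : ℝ) : ℂ))
        - (1 / ((Q:ℕ) : ℂ) * ∑ r ∈ Finset.range Q, Complex.exp (Complex.I *
          ((2 * π * (((A : ℝ) * r ^ 2 - (B : ℝ) * r) / Q) : ℝ) : ℂ))) * ∫ t : ℝ, g t‖
      = ‖∑ r ∈ Finset.range Q, e r * Sr r‖ := by rw [hfold, ← hL, hedef]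
    _ ≤ (Q:ℝ) * ((N:ℝ) * (K * Q)) := hnorm
    _ ≤ 5*(6*π+1)*(Cψ+1) * (2:ℝ)^((3*ε-1)*(j:ℝ)) := hfin
end
end

section
/- Let ρ ≥ 1 and σ: (0,∞) × ℝ → ℂ satisfy |σ(λ,ξ)| ≲ |ξ|/(ρ²√λ) when |ξ| < cρ√λ, |σ(λ,ξ)| ≲ 1/ρ when cρ√λ ≤ |ξ| ≤ Cρ√λ, and |σ(λ,ξ)| ≲ √λ/|ξ| when |ξ| > Cρ√λ. Let Λ ⊂ (0,∞) contain at most ρ² points in each dyadic interval [2^j, 2^{j+1}). Then for every ξ ∈ ℝ and every k ∈ ℤ, ∑_{λ ∈ Λ : 2^k ≤ |ξ|/(ρ√λ) < 2^{k+1}} |σ(λ,ξ)|² ≲ min{2^{2k}, 2^{-2k}}, and consequently ∑_{λ ∈ Λ} |σ(λ,ξ)|² ≲ 1 uniformly in ξ. -/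
open Real

noncomputable section


lemma aux_summable : Summable (fun k : ℤ => ((1:ℝ)/4) ^ k.natAbs) := by
  apply Summable.of_nat_of_neg
  · simpa using summable_geometric_of_lt_one (r := (1:ℝ)/4) (by norm_num) (by norm_num)
  · simpa using summable_geometric_of_lt_one (r := (1:ℝ)/4) (by norm_num) (by norm_num)

lemma aux_min_le (k : ℤ) :
    min ((2:ℝ) ^ (2*k)) ((2:ℝ) ^ (-(2*k))) ≤ ((1:ℝ)/4) ^ k.natAbs := by
  have h2 : ((2:ℝ) ^ (-2:ℤ)) = (1:ℝ)/4 := by norm_num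
  rcases le_or_gt 0 k with hk | hk
  · have e : (2:ℝ) ^ (-(2*k)) = ((1:ℝ)/4) ^ k.natAbs := by
      rw [show -(2*k) = (-2) * k by ring, zpow_mul, h2,
        show k = (k.natAbs : ℤ) by rw [Int.natAbs_of_nonneg hk], zpow_natCast]
      simp [Int.natAbs_abs]
    rw [← e]; exact min_le_right _ _
  · have e : (2:ℝ) ^ (2*k) = ((1:ℝ)/4) ^ k.natAbs := by
      rw [show 2*k = (-2) * (-k) by ring, zpow_mul, h2,
        show -k = (k.natAbs : ℤ) by rw [Int.ofNat_natAbs_of_nonpos hk.le], zpow_natCast]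
    rw [← e]; exact min_le_left _ _

set_option maxHeartbeats 1000000 in
lemma aux_min_bound (c C C₁ ρ s ξ ν t r M : ℝ) (hc : 0 < c) (hcC : c < C) (hC₁ : 0 < C₁)
    (hρ : 1 ≤ ρ) (hs : 0 < s) (hν : 0 ≤ ν) (ht : 0 < t)
    (hM4 : (4:ℝ) ≤ M) (hMc4 : c ^ 4 ≤ M) (hM4c : 4 / c ^ 2 ≤ M)
    (hMC2 : C ^ 2 ≤ M) (hM4C : 4 / C ^ 4 ≤ M)
    (h1 : |ξ| < c * ρ * s → ν ≤ C₁ * |ξ| / (ρ ^ 2 * s))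
    (h2 : c * ρ * s ≤ |ξ| → |ξ| ≤ C * ρ * s → ν ≤ C₁ / ρ)
    (h3 : C * ρ * s < |ξ| → ν ≤ C₁ * s / |ξ|)
    (hξr : |ξ| = r * (ρ * s))
    (hr1 : t ≤ r) (hr2 : r < 2 * t) :
    ν ^ 2 ≤ C₁ ^ 2 * M / ρ ^ 2 * min (t ^ 2) (t ^ 2)⁻¹ := by
  have hC0 : 0 < C := hc.trans hcC
  have hρ0 : 0 < ρ := lt_of_lt_of_le one_pos hρ
  have hrs : 0 < ρ * s := mul_pos hρ0 hs
  have hr0 : 0 < r := ht.trans_le hr1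
  have hgoal_eq : C₁ ^ 2 * M / ρ ^ 2 * min (t ^ 2) (t ^ 2)⁻¹
      = C₁ ^ 2 / ρ ^ 2 * (M * min (t ^ 2) (t ^ 2)⁻¹) := by ring
  rw [hgoal_eq]
  have ht2 : (0:ℝ) < t ^ 2 := by positivity
  rcases lt_or_ge (|ξ|) (c * ρ * s) with hreg | hreg
  · -- regime 1
    have hb := h1 hreg
    rw [hξr] at hreg
    have hrc : r < c := by nlinarith [hreg, hrs]
    have hbr : ν ≤ C₁ * r / ρ := by
      have e : C₁ * |ξ| / (ρ ^ 2 * s) = C₁ * r / ρ := by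
        rw [hξr]; field_simp
      linarith [hb, e.le]
    have hw : r ^ 2 ≤ M * min (t ^ 2) (t ^ 2)⁻¹ := by
      rcases le_total (t ^ 2) ((t ^ 2)⁻¹) with hmn | hmn
      · rw [min_eq_left hmn]
        nlinarith [hr1, hr2, hr0, ht, hM4, ht2]
      · rw [min_eq_right hmn, ← div_eq_mul_inv, le_div_iff₀ ht2]
        have ha : t ^ 2 ≤ r ^ 2 := by nlinarith
        have hb2 : r ^ 2 < c ^ 2 := by nlinarith
        have hc1 : r ^ 2 * t ^ 2 ≤ r ^ 2 * r ^ 2 := by nlinarith [sq_nonneg r]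
        have hc2 : r ^ 2 * r ^ 2 < c ^ 2 * c ^ 2 := by nlinarith [sq_nonneg r, sq_nonneg c]
        nlinarith [hMc4]
    calc ν ^ 2 ≤ (C₁ * r / ρ) ^ 2 := by
          apply pow_le_pow_left₀ hν hbr
      _ = C₁ ^ 2 / ρ ^ 2 * r ^ 2 := by field_simp
      _ ≤ C₁ ^ 2 / ρ ^ 2 * (M * min (t ^ 2) (t ^ 2)⁻¹) := by
          apply mul_le_mul_of_nonneg_left hw (by positivity)
  · rcases le_or_gt (|ξ|) (C * ρ * s) with hreg2 | hreg2
    · -- regime 2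
      have hb := h2 hreg hreg2
      rw [hξr] at hreg hreg2
      have hcr : c ≤ r := by nlinarith [hreg, hrs]
      have hrC : r ≤ C := by nlinarith [hreg2, hrs]
      have hw : 1 ≤ M * min (t ^ 2) (t ^ 2)⁻¹ := by
        rcases le_total (t ^ 2) ((t ^ 2)⁻¹) with hmn | hmn
        · rw [min_eq_left hmn]
          have hcc : c ^ 2 < 4 * t ^ 2 := by nlinarith [hr2, hcr, hc, ht]
          have hd : 4 / c ^ 2 * c ^ 2 = 4 := by field_simp
          nlinarith [hM4c, ht2, hcc, hd, mul_pos (by positivity : (0:ℝ) < 4 / c^2) ht2]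
        · rw [min_eq_right hmn, ← div_eq_mul_inv, le_div_iff₀ ht2]
          nlinarith [hr1, hrC, ht, hMC2, hc, hcr]
      calc ν ^ 2 ≤ (C₁ / ρ) ^ 2 := by
            apply pow_le_pow_left₀ hν hb
        _ = C₁ ^ 2 / ρ ^ 2 * 1 := by field_simp
        _ ≤ C₁ ^ 2 / ρ ^ 2 * (M * min (t ^ 2) (t ^ 2)⁻¹) := by
            apply mul_le_mul_of_nonneg_left hw (by positivity)
    · -- regime 3
      have hb := h3 hreg2
      rw [hξr] at hreg2
      have hCr : C < r := by nlinarith [hreg2, hrs]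
      have hbr : ν ≤ C₁ / (ρ * r) := by
        have e : C₁ * s / |ξ| = C₁ / (ρ * r) := by
          rw [hξr]; field_simp
        linarith [hb, e.le]
      have hr2' : (0:ℝ) < r ^ 2 := by positivity
      have hw : (r ^ 2)⁻¹ ≤ M * min (t ^ 2) (t ^ 2)⁻¹ := by
        rcases le_total (t ^ 2) ((t ^ 2)⁻¹) with hmn | hmn
        · rw [min_eq_left hmn, inv_eq_one_div, div_le_iff₀ hr2']
          have hC2r : C ^ 2 < r ^ 2 := by nlinarith [hCr, hC0]
          have hC2t : C ^ 2 < 4 * t ^ 2 := by nlinarith [hr2, hCr, hC0, ht]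
          have he : 4 / C ^ 4 * C ^ 4 = 4 := by field_simp
          have he0 : (0:ℝ) < 4 / C ^ 4 := by positivity
          nlinarith [hM4C, ht2, hr2', hC2r, hC2t, he, he0,
            mul_pos ht2 hr2', mul_pos he0 ht2,
            mul_lt_mul_of_pos_left hC2r (mul_pos he0 ht2),
            mul_lt_mul_of_pos_right hC2t (mul_pos he0 (pow_pos hC0 2))]
        · rw [min_eq_right hmn]
          have h1' : (r ^ 2)⁻¹ ≤ (t ^ 2)⁻¹ := by
            apply inv_anti₀ ht2
            nlinarith [hr1, ht]
          have h2' : (t ^ 2)⁻¹ ≤ M * (t ^ 2)⁻¹ :=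
            le_mul_of_one_le_left (by positivity) (by linarith)
          exact h1'.trans h2'
      calc ν ^ 2 ≤ (C₁ / (ρ * r)) ^ 2 := by
            apply pow_le_pow_left₀ hν hbr
        _ = C₁ ^ 2 / ρ ^ 2 * (r ^ 2)⁻¹ := by field_simp
        _ ≤ C₁ ^ 2 / ρ ^ 2 * (M * min (t ^ 2) (t ^ 2)⁻¹) := by
            apply mul_le_mul_of_nonneg_left hw (by positivity)

set_option maxHeartbeats 2000000 in
/-- Pointwise square-function bound (e:sig4): if `σ` satisfies the three-regime size bounds and
`Λ ⊂ (0,∞)` has at most `ρ²` points in each dyadic interval, then for each `ξ` and `k`,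
`∑_{λ∈Λ : 2^k ≤ |ξ|/(ρ√λ) < 2^{k+1}} |σ(λ,ξ)|² ≲ min{2^{2k}, 2^{-2k}}`, and consequently
`∑_{λ∈Λ} |σ(λ,ξ)|² ≲ 1`. -/
theorem stmt15 (c C C₁ : ℝ) (hc : 0 < c) (hcC : c < C) (hC₁ : 0 < C₁) :
    ∃ K : ℝ, 0 < K ∧
    ∀ (ρ : ℝ), 1 ≤ ρ → ∀ (σ : ℝ → ℝ → ℂ),
    (∀ lam ξ : ℝ, 0 < lam →
      (|ξ| < c * ρ * Real.sqrt lam → ‖σ lam ξ‖ ≤ C₁ * |ξ| / (ρ ^ 2 * Real.sqrt lam)) ∧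
      (c * ρ * Real.sqrt lam ≤ |ξ| → |ξ| ≤ C * ρ * Real.sqrt lam → ‖σ lam ξ‖ ≤ C₁ / ρ) ∧
      (C * ρ * Real.sqrt lam < |ξ| → ‖σ lam ξ‖ ≤ C₁ * Real.sqrt lam / |ξ|)) →
    ∀ Λ : Set ℝ, Λ ⊆ Set.Ioi (0 : ℝ) →
    (∀ j : ℤ, (Λ ∩ Set.Ico ((2 : ℝ) ^ j) ((2 : ℝ) ^ (j + 1))).Finite ∧
      ((Λ ∩ Set.Ico ((2 : ℝ) ^ j) ((2 : ℝ) ^ (j + 1))).ncard : ℝ) ≤ ρ ^ 2) →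
    ∀ ξ : ℝ,
      (∀ k : ℤ,
        ∑' lam : {l : ℝ // l ∈ Λ ∧ (2 : ℝ) ^ k ≤ |ξ| / (ρ * Real.sqrt l) ∧
            |ξ| / (ρ * Real.sqrt l) < (2 : ℝ) ^ (k + 1)},
          ‖σ (lam : ℝ) ξ‖ ^ 2 ≤ K * min ((2 : ℝ) ^ (2 * k)) ((2 : ℝ) ^ (-(2 * k)))) ∧
      ∑' lam : Λ, ‖σ (lam : ℝ) ξ‖ ^ 2 ≤ K := by
  have hC0 : 0 < C := hc.trans hcC
  have hp1 : (0:ℝ) < c ^ 4 := by positivity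
  have hp2 : (0:ℝ) < 4 / c ^ 2 := by positivity
  have hp3 : (0:ℝ) < C ^ 2 := by positivity
  have hp4 : (0:ℝ) < 4 / C ^ 4 := by positivity
  obtain ⟨M, hMdef⟩ : ∃ M : ℝ, M = 4 + c ^ 4 + 4 / c ^ 2 + C ^ 2 + 4 / C ^ 4 := ⟨_, rfl⟩
  have hM4 : (4:ℝ) ≤ M := by rw [hMdef]; linarith
  have hMc4 : c ^ 4 ≤ M := by rw [hMdef]; linarith
  have hM4c : 4 / c ^ 2 ≤ M := by rw [hMdef]; linarith
  have hMC2 : C ^ 2 ≤ M := by rw [hMdef]; linarith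
  have hM4C : 4 / C ^ 4 ≤ M := by rw [hMdef]; linarith
  have hM0 : (0:ℝ) < M := by linarith
  obtain ⟨A, hAdef⟩ : ∃ A : ℝ, A = C₁ ^ 2 * M := ⟨_, rfl⟩
  have hA0 : 0 < A := by rw [hAdef]; positivity
  obtain ⟨B, hBdef⟩ : ∃ B : ℝ, B = ∑' k : ℤ, ((1:ℝ)/4) ^ k.natAbs := ⟨_, rfl⟩
  have hB1 : (1:ℝ) ≤ B := by
    rw [hBdef]
    have := Summable.le_tsum aux_summable 0 (fun j _ => by positivity)
    simpa using this
  have hK0 : 0 < 3 * A * B + 1 := by nlinarith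
  refine ⟨3 * A * B + 1, hK0, ?_⟩
  intro ρ hρ σ hσ Λ hΛpos hΛcard ξ
  have hρ0 : 0 < ρ := lt_of_lt_of_le one_pos hρ
  -- counting: the k-th block is finite with at most 3ρ² points
  have hS : ∀ k : ℤ,
      {l : ℝ | l ∈ Λ ∧ (2:ℝ) ^ k ≤ |ξ| / (ρ * Real.sqrt l) ∧
        |ξ| / (ρ * Real.sqrt l) < (2:ℝ) ^ (k+1)}.Finite ∧
      (({l : ℝ | l ∈ Λ ∧ (2:ℝ) ^ k ≤ |ξ| / (ρ * Real.sqrt l) ∧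
        |ξ| / (ρ * Real.sqrt l) < (2:ℝ) ^ (k+1)}.ncard : ℝ) ≤ 3 * ρ ^ 2) := by
    intro k
    have ht0 : (0:ℝ) < (2:ℝ) ^ k := by positivity
    by_cases hξ0 : ξ = 0
    · have hempty : {l : ℝ | l ∈ Λ ∧ (2:ℝ) ^ k ≤ |ξ| / (ρ * Real.sqrt l) ∧
          |ξ| / (ρ * Real.sqrt l) < (2:ℝ) ^ (k+1)} = ∅ := by
        apply Set.eq_empty_iff_forall_notMem.mpr
        rintro l ⟨hlΛ, hk1, -⟩
        rw [hξ0] at hk1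
        simp only [abs_zero, zero_div] at hk1
        linarith
      rw [hempty]
      constructor
      · exact Set.finite_empty
      · simp; positivity
    · have hξa : 0 < |ξ| := abs_pos.mpr hξ0
      obtain ⟨a, hadef⟩ : ∃ a : ℝ, a = ξ ^ 2 / (ρ ^ 2 * (2:ℝ) ^ (2*k+2)) := ⟨_, rfl⟩
      have ha0 : 0 < a := by rw [hadef]; positivity
      obtain ⟨j, hjdef⟩ : ∃ j : ℤ, j = Int.log 2 a := ⟨_, rfl⟩
      have hja : (2:ℝ) ^ j ≤ a := by
        rw [hjdef]
        have := Int.zpow_log_le_self (b := 2) (R := ℝ) (by norm_num) ha0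
        simpa using this
      have hja' : a < (2:ℝ) ^ (j+1) := by
        rw [hjdef]
        have := Int.lt_zpow_succ_log_self (b := 2) (R := ℝ) (by norm_num) a
        simpa using this
      have e1 : (2:ℝ) ^ (2*k+2) = 4 * ((2:ℝ) ^ k) ^ 2 := by
        rw [show (2*k+2 : ℤ) = (k+1)+(k+1) by ring,
          zpow_add₀ (by norm_num : (2:ℝ) ≠ 0),
          zpow_add_one₀ (by norm_num : (2:ℝ) ≠ 0)]
        ring
      have ekp1 : (2:ℝ) ^ (k+1) = 2 * (2:ℝ) ^ k := by
        rw [zpow_add_one₀ (by norm_num : (2:ℝ) ≠ 0)]; ring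
      have hsub : {l : ℝ | l ∈ Λ ∧ (2:ℝ) ^ k ≤ |ξ| / (ρ * Real.sqrt l) ∧
          |ξ| / (ρ * Real.sqrt l) < (2:ℝ) ^ (k+1)} ⊆
          (Λ ∩ Set.Ico ((2:ℝ) ^ j) ((2:ℝ) ^ (j+1))) ∪
          (Λ ∩ Set.Ico ((2:ℝ) ^ (j+1)) ((2:ℝ) ^ (j+1+1))) ∪
          (Λ ∩ Set.Ico ((2:ℝ) ^ (j+1+1)) ((2:ℝ) ^ (j+1+1+1))) := by
        rintro l ⟨hlΛ, hk1, hk2⟩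
        have hl0 : 0 < l := hΛpos hlΛ
        have hs0 : 0 < Real.sqrt l := Real.sqrt_pos.mpr hl0
        have hsq : Real.sqrt l ^ 2 = l := Real.sq_sqrt hl0.le
        have hd1 : (2:ℝ) ^ k * (ρ * Real.sqrt l) ≤ |ξ| :=
          (le_div_iff₀ (by positivity)).mp hk1
        have hd2 : |ξ| < 2 * (2:ℝ) ^ k * (ρ * Real.sqrt l) := by
          have := (div_lt_iff₀ (by positivity : (0:ℝ) < ρ * Real.sqrt l)).mp hk2
          rw [ekp1] at this; linarith [this]
        have h1sq : ((2:ℝ) ^ k) ^ 2 * (ρ ^ 2 * l) ≤ ξ ^ 2 := by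
          have hprod := mul_self_le_mul_self (by positivity) hd1
          nlinarith [hprod, hsq, sq_abs ξ]
        have h2sq : ξ ^ 2 < 4 * ((2:ℝ) ^ k) ^ 2 * (ρ ^ 2 * l) := by
          have hprod := mul_self_lt_mul_self (abs_nonneg ξ) hd2
          nlinarith [hprod, hsq, sq_abs ξ]
        have hal : a < l := by
          rw [hadef, e1, div_lt_iff₀ (by positivity)]
          nlinarith [h2sq]
        have hl4a : l ≤ 4 * a := by
          have e2 : 4 * a = ξ ^ 2 / (ρ ^ 2 * ((2:ℝ) ^ k) ^ 2) := by
            rw [hadef, e1]; field_simp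
          rw [e2, le_div_iff₀ (by positivity)]
          nlinarith [h1sq]
        have hll : (2:ℝ) ^ j ≤ l := (hja.trans_lt hal).le
        have e3 : (2:ℝ) ^ (j+1+1+1) = 4 * (2:ℝ) ^ (j+1) := by
          rw [zpow_add_one₀ (by norm_num : (2:ℝ) ≠ 0),
            zpow_add_one₀ (by norm_num : (2:ℝ) ≠ 0)]
          ring
        have hlu : l < (2:ℝ) ^ (j+1+1+1) := by
          rw [e3]; linarith
        rcases lt_or_ge l ((2:ℝ) ^ (j+1)) with hcase1 | hcase1
        · exact Or.inl (Or.inl ⟨hlΛ, hll, hcase1⟩)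
        · rcases lt_or_ge l ((2:ℝ) ^ (j+1+1)) with hcase2 | hcase2
          · exact Or.inl (Or.inr ⟨hlΛ, hcase1, hcase2⟩)
          · exact Or.inr ⟨hlΛ, hcase2, hlu⟩
      have hUfin : ((Λ ∩ Set.Ico ((2:ℝ) ^ j) ((2:ℝ) ^ (j+1))) ∪
          (Λ ∩ Set.Ico ((2:ℝ) ^ (j+1)) ((2:ℝ) ^ (j+1+1))) ∪
          (Λ ∩ Set.Ico ((2:ℝ) ^ (j+1+1)) ((2:ℝ) ^ (j+1+1+1)))).Finite :=
        (((hΛcard j).1.union (hΛcard (j+1)).1).union (hΛcard (j+1+1)).1)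
      refine ⟨hUfin.subset hsub, ?_⟩
      have hn1 := Set.ncard_le_ncard hsub hUfin
      have hn2 := Set.ncard_union_le
        ((Λ ∩ Set.Ico ((2:ℝ) ^ j) ((2:ℝ) ^ (j+1))) ∪
          (Λ ∩ Set.Ico ((2:ℝ) ^ (j+1)) ((2:ℝ) ^ (j+1+1))))
        (Λ ∩ Set.Ico ((2:ℝ) ^ (j+1+1)) ((2:ℝ) ^ (j+1+1+1)))
      have hn3 := Set.ncard_union_le
        (Λ ∩ Set.Ico ((2:ℝ) ^ j) ((2:ℝ) ^ (j+1)))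
        (Λ ∩ Set.Ico ((2:ℝ) ^ (j+1)) ((2:ℝ) ^ (j+1+1)))
      have hc1 := (hΛcard j).2
      have hc2 := (hΛcard (j+1)).2
      have hc3 := (hΛcard (j+1+1)).2
      have : (({l : ℝ | l ∈ Λ ∧ (2:ℝ) ^ k ≤ |ξ| / (ρ * Real.sqrt l) ∧
          |ξ| / (ρ * Real.sqrt l) < (2:ℝ) ^ (k+1)}.ncard : ℝ)) ≤
          (((Λ ∩ Set.Ico ((2:ℝ) ^ j) ((2:ℝ) ^ (j+1))) ∪
          (Λ ∩ Set.Ico ((2:ℝ) ^ (j+1)) ((2:ℝ) ^ (j+1+1))) ∪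
          (Λ ∩ Set.Ico ((2:ℝ) ^ (j+1+1)) ((2:ℝ) ^ (j+1+1+1)))).ncard : ℝ) := by
        exact_mod_cast hn1
      have h23 : ((((Λ ∩ Set.Ico ((2:ℝ) ^ j) ((2:ℝ) ^ (j+1))) ∪
          (Λ ∩ Set.Ico ((2:ℝ) ^ (j+1)) ((2:ℝ) ^ (j+1+1))) ∪
          (Λ ∩ Set.Ico ((2:ℝ) ^ (j+1+1)) ((2:ℝ) ^ (j+1+1+1)))).ncard : ℝ)) ≤
          ((Λ ∩ Set.Ico ((2:ℝ) ^ j) ((2:ℝ) ^ (j+1))).ncard : ℝ) +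
          ((Λ ∩ Set.Ico ((2:ℝ) ^ (j+1)) ((2:ℝ) ^ (j+1+1))).ncard : ℝ) +
          ((Λ ∩ Set.Ico ((2:ℝ) ^ (j+1+1)) ((2:ℝ) ^ (j+1+1+1))).ncard : ℝ) := by
        exact_mod_cast le_trans hn2 (by omega)
      linarith
  -- block sum bound for finsets of reals contained in the k-th block
  have hblock : ∀ (k : ℤ) (G : Finset ℝ),
      (∀ l ∈ G, l ∈ Λ ∧ (2:ℝ) ^ k ≤ |ξ| / (ρ * Real.sqrt l) ∧
        |ξ| / (ρ * Real.sqrt l) < (2:ℝ) ^ (k+1)) →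
      ∑ l ∈ G, ‖σ l ξ‖ ^ 2 ≤ 3 * A * min ((2:ℝ) ^ (2*k)) ((2:ℝ) ^ (-(2*k))) := by
    intro k G hG
    have ht0 : (0:ℝ) < (2:ℝ) ^ k := by positivity
    have ht2 : (0:ℝ) < ((2:ℝ) ^ k) ^ 2 := by positivity
    have e1 : (2:ℝ) ^ (2*k) = ((2:ℝ) ^ k) ^ 2 := by
      rw [two_mul, zpow_add₀ (by norm_num : (2:ℝ) ≠ 0)]; ring
    have e2 : (2:ℝ) ^ (-(2*k)) = (((2:ℝ) ^ k) ^ 2)⁻¹ := by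
      rw [zpow_neg, e1]
    rw [e1, e2]
    have hmin0 : (0:ℝ) ≤ min (((2:ℝ) ^ k) ^ 2) ((((2:ℝ) ^ k) ^ 2)⁻¹) :=
      le_min (by positivity) (by positivity)
    have hbound0 : (0:ℝ) ≤ C₁ ^ 2 * M / ρ ^ 2 * min (((2:ℝ) ^ k) ^ 2) ((((2:ℝ) ^ k) ^ 2)⁻¹) := by
      have : (0:ℝ) ≤ C₁ ^ 2 * M / ρ ^ 2 := by positivity
      exact mul_nonneg this hmin0
    have hterm : ∀ l ∈ G, ‖σ l ξ‖ ^ 2 ≤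
        C₁ ^ 2 * M / ρ ^ 2 * min (((2:ℝ) ^ k) ^ 2) ((((2:ℝ) ^ k) ^ 2)⁻¹) := by
      intro l hl
      obtain ⟨hlΛ, hk1, hk2⟩ := hG l hl
      have hl0 : 0 < l := hΛpos hlΛ
      have hs0 : 0 < Real.sqrt l := Real.sqrt_pos.mpr hl0
      obtain ⟨H1, H2, H3⟩ := hσ l ξ hl0
      have hrs : (0:ℝ) < ρ * Real.sqrt l := by positivity
      have hξr : |ξ| = |ξ| / (ρ * Real.sqrt l) * (ρ * Real.sqrt l) :=
        (div_mul_cancel₀ _ hrs.ne').symm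
      have hr2 : |ξ| / (ρ * Real.sqrt l) < 2 * (2:ℝ) ^ k := by
        have := hk2
        rw [zpow_add_one₀ (by norm_num : (2:ℝ) ≠ 0)] at this
        linarith
      exact aux_min_bound c C C₁ ρ (Real.sqrt l) ξ (‖σ l ξ‖) ((2:ℝ) ^ k)
        (|ξ| / (ρ * Real.sqrt l)) M hc hcC hC₁ hρ hs0 (norm_nonneg _) ht0
        hM4 hMc4 hM4c hMC2 hM4C H1 H2 H3 hξr hk1 hr2
    calc ∑ l ∈ G, ‖σ l ξ‖ ^ 2
        ≤ G.card • (C₁ ^ 2 * M / ρ ^ 2 * min (((2:ℝ) ^ k) ^ 2) ((((2:ℝ) ^ k) ^ 2)⁻¹)) :=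
          Finset.sum_le_card_nsmul G _ _ hterm
      _ = (G.card : ℝ) * (C₁ ^ 2 * M / ρ ^ 2 *
            min (((2:ℝ) ^ k) ^ 2) ((((2:ℝ) ^ k) ^ 2)⁻¹)) := nsmul_eq_mul _ _
      _ ≤ 3 * ρ ^ 2 * (C₁ ^ 2 * M / ρ ^ 2 *
            min (((2:ℝ) ^ k) ^ 2) ((((2:ℝ) ^ k) ^ 2)⁻¹)) := by
          apply mul_le_mul_of_nonneg_right _ hbound0
          obtain ⟨hfin, hcard⟩ := hS k
          have hGsub : ↑G ⊆ {l : ℝ | l ∈ Λ ∧ (2:ℝ) ^ k ≤ |ξ| / (ρ * Real.sqrt l) ∧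
              |ξ| / (ρ * Real.sqrt l) < (2:ℝ) ^ (k+1)} := by
            intro l hl
            exact hG l (by simpa using hl)
          have := Set.ncard_le_ncard hGsub hfin
          rw [Set.ncard_coe_finset] at this
          calc (G.card : ℝ) ≤ _ := by exact_mod_cast this
            _ ≤ 3 * ρ ^ 2 := hcard
      _ = 3 * A * min (((2:ℝ) ^ k) ^ 2) ((((2:ℝ) ^ k) ^ 2)⁻¹) := by
          rw [hAdef]; field_simp
  constructor
  · -- per-k bound
    intro k
    have hmin0 : (0:ℝ) ≤ min ((2:ℝ) ^ (2*k)) ((2:ℝ) ^ (-(2*k))) :=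
      le_min (by positivity) (by positivity)
    apply tsum_le_of_sum_le' (by nlinarith)
    intro u
    have e : ∑ x ∈ u, ‖σ (x : ℝ) ξ‖ ^ 2 = ∑ l ∈ u.image Subtype.val, ‖σ l ξ‖ ^ 2 :=
      (Finset.sum_image (g := Subtype.val) (f := fun l => ‖σ l ξ‖ ^ 2) (s := u)
        (fun x _ y _ h => Subtype.val_injective h)).symm
    rw [e]
    have hb := hblock k (u.image Subtype.val) (by
      intro l hl
      obtain ⟨x, -, rfl⟩ := Finset.mem_image.mp hl
      exact x.2)
    have h3A : 3 * A ≤ 3 * A * B + 1 := by nlinarith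
    calc ∑ l ∈ u.image Subtype.val, ‖σ l ξ‖ ^ 2
        ≤ 3 * A * min ((2:ℝ) ^ (2*k)) ((2:ℝ) ^ (-(2*k))) := hb
      _ ≤ (3 * A * B + 1) * min ((2:ℝ) ^ (2*k)) ((2:ℝ) ^ (-(2*k))) :=
          mul_le_mul_of_nonneg_right h3A hmin0
  · -- total bound
    apply tsum_le_of_sum_le' hK0.le
    intro u
    by_cases hξ0 : ξ = 0
    · have : ∀ x ∈ u, ‖σ (x : ℝ) ξ‖ ^ 2 = 0 := by
        intro x _
        have hl0 : 0 < (x : ℝ) := hΛpos x.2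
        have hs0 : 0 < Real.sqrt x := Real.sqrt_pos.mpr hl0
        have hb := (hσ x ξ hl0).1 (by rw [hξ0]; simpa using by positivity)
        rw [hξ0] at hb ⊢
        simp only [abs_zero, mul_zero, zero_div, mul_comm] at hb
        have : ‖σ (x : ℝ) 0‖ = 0 := le_antisymm (by simpa using hb) (norm_nonneg _)
        simp [this]
      rw [Finset.sum_eq_zero this]
      exact hK0.le
    · have hξa : 0 < |ξ| := abs_pos.mpr hξ0
      classical
      set κ : Λ → ℤ := fun x => Int.log 2 (|ξ| / (ρ * Real.sqrt (x : ℝ))) with hκdef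
      rw [← Finset.sum_fiberwise_of_maps_to
        (g := κ) (t := u.image κ) (fun x hx => Finset.mem_image_of_mem κ hx)
        (fun x => ‖σ (x : ℝ) ξ‖ ^ 2)]
      have hinner : ∀ k ∈ u.image κ,
          ∑ x ∈ u.filter (fun x => κ x = k), ‖σ (x : ℝ) ξ‖ ^ 2 ≤
          3 * A * ((1:ℝ)/4) ^ k.natAbs := by
        intro k _
        have e : ∑ x ∈ u.filter (fun x => κ x = k), ‖σ (x : ℝ) ξ‖ ^ 2 =
            ∑ l ∈ (u.filter (fun x => κ x = k)).image Subtype.val, ‖σ l ξ‖ ^ 2 :=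
          (Finset.sum_image (g := Subtype.val) (f := fun l => ‖σ l ξ‖ ^ 2)
            (s := u.filter (fun x => κ x = k))
            (fun x _ y _ h => Subtype.val_injective h)).symm
        rw [e]
        have hb := hblock k ((u.filter (fun x => κ x = k)).image Subtype.val) (by
          intro l hl
          obtain ⟨x, hx, rfl⟩ := Finset.mem_image.mp hl
          have hxk : κ x = k := (Finset.mem_filter.mp hx).2
          have hl0 : 0 < (x : ℝ) := hΛpos x.2
          have hr0 : 0 < |ξ| / (ρ * Real.sqrt (x : ℝ)) := by positivity
          refine ⟨x.2, ?_, ?_⟩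
          · have := Int.zpow_log_le_self (b := 2) (R := ℝ) (by norm_num) hr0
            rw [hκdef] at hxk
            simp only at hxk
            rw [← hxk]
            simpa using this
          · have := Int.lt_zpow_succ_log_self (b := 2) (R := ℝ) (by norm_num)
              (|ξ| / (ρ * Real.sqrt (x : ℝ)))
            rw [hκdef] at hxk
            simp only at hxk
            rw [← hxk]
            simpa using this)
        refine hb.trans ?_
        apply mul_le_mul_of_nonneg_left (aux_min_le k) (by positivity)
      calc ∑ k ∈ u.image κ, ∑ x ∈ u.filter (fun x => κ x = k), ‖σ (x : ℝ) ξ‖ ^ 2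
          ≤ ∑ k ∈ u.image κ, 3 * A * ((1:ℝ)/4) ^ k.natAbs :=
            Finset.sum_le_sum hinner
        _ = 3 * A * ∑ k ∈ u.image κ, ((1:ℝ)/4) ^ k.natAbs := by
            rw [Finset.mul_sum]
        _ ≤ 3 * A * B := by
            apply mul_le_mul_of_nonneg_left _ (by positivity)
            rw [hBdef]
            exact Summable.sum_le_tsum _ (fun k _ => by positivity) aux_summable
        _ ≤ 3 * A * B + 1 := by linarith
end
end
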